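/- Let A be an n×n matrix with nonnegative real entries. There exists a vector y with all positive coordinates such that y_i^{-1} a_{ij} y_j ≤ 1 for all i, j if and only if every cycle in the weighted digraph of A has weight (product of edge weights) at most 1. -/

import Mathlib

open scoped NNReal

/-- Max-times matrix product. -/
noncomputable def maxMul {n : ℕ} (A B : Matrix (Fin n) (Fin n) ℝ≥0) : Matrix (Fin n) (Fin n) ℝ≥0 :=
  fun i j => Finset.univ.sup fun k => A i k * B k j

/-- Max-times matrix power. -/
noncomputable def maxPow {n : ℕ} (A : Matrix (Fin n) (Fin n) ℝ≥0) : ℕ → Matrix (Fin n) (Fin n) ℝ≥0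
  | 0 => fun i j => if i = j then 1 else 0
  | (k+1) => maxMul (maxPow A k) A

/-- Max-times matrix-vector product. -/
noncomputable def maxVec {n : ℕ} (A : Matrix (Fin n) (Fin n) ℝ≥0) (x : Fin n → ℝ≥0) : Fin n → ℝ≥0 :=
  fun i => Finset.univ.sup fun j => A i j * x j

/-- Weight of the cycle visiting `c 0, c 1, ..., c m, c 0` (indices cyclic in `Fin (m+1)`). -/
noncomputable def cycleWeight {n m : ℕ} (A : Matrix (Fin n) (Fin n) ℝ≥0) (c : Fin (m+1) → Fin n) : ℝ≥0 :=
  ∏ i : Fin (m+1), A (c i) (c (i + 1))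

/-- Kleene star `I ⊕ A ⊕ ... ⊕ A^{n-1}`. -/
noncomputable def kleeneStar {n : ℕ} (A : Matrix (Fin n) (Fin n) ℝ≥0) : Matrix (Fin n) (Fin n) ℝ≥0 :=
  fun i j => (Finset.range n).sup fun k => maxPow A k i j

lemma maxPow_succ {n : ℕ} (A : Matrix (Fin n) (Fin n) ℝ≥0) (k : ℕ) (i j : Fin n) :
    maxPow A (k+1) i j = Finset.univ.sup fun l => maxPow A k i l * A l j := rfl

lemma weight_le_maxPow {n : ℕ} (A : Matrix (Fin n) (Fin n) ℝ≥0) (k : ℕ) (p : ℕ → Fin n) :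
    (∏ t ∈ Finset.range k, A (p t) (p (t+1))) ≤ maxPow A k (p 0) (p k) := by
  induction k with
  | zero => simp [maxPow]
  | succ k ih =>
    rw [Finset.prod_range_succ, maxPow_succ]
    calc (∏ t ∈ Finset.range k, A (p t) (p (t+1))) * A (p k) (p (k+1))
        ≤ maxPow A k (p 0) (p k) * A (p k) (p (k+1)) := mul_le_mul_left ih _
      _ ≤ _ := Finset.le_sup (f := fun l => maxPow A k (p 0) l * A l (p (k+1)))
          (Finset.mem_univ (p k))

lemma exists_path {n : ℕ} (hn : 0 < n) (A : Matrix (Fin n) (Fin n) ℝ≥0) :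
    ∀ (k : ℕ) (i j : Fin n), maxPow A k i j ≠ 0 →
      ∃ p : ℕ → Fin n, p 0 = i ∧ p k = j ∧
        maxPow A k i j ≤ ∏ t ∈ Finset.range k, A (p t) (p (t+1)) := by
  have : Nonempty (Fin n) := Fin.pos_iff_nonempty.mp hn
  intro k
  induction k with
  | zero =>
    intro i j h
    by_cases hij : i = j
    · subst hij
      exact ⟨fun _ => i, rfl, rfl, by simp [maxPow]⟩
    · simp [maxPow, hij] at h
  | succ k ih =>
    intro i j h
    obtain ⟨l, -, hl⟩ := Finset.exists_mem_eq_sup Finset.univ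
      Finset.univ_nonempty (fun l => maxPow A k i l * A l j)
    rw [maxPow_succ] at h ⊢
    rw [hl] at h ⊢
    have hne : maxPow A k i l ≠ 0 := fun h0 => h (by simp [h0])
    obtain ⟨p, hp0, hpk, hple⟩ := ih i l hne
    set q : ℕ → Fin n := fun t => if t ≤ k then p t else j with hq
    refine ⟨q, by simpa [hq] using hp0, by simp [hq], ?_⟩
    rw [Finset.prod_range_succ]
    have h1 : ∀ t ∈ Finset.range k, A (q t) (q (t+1)) = A (p t) (p (t+1)) := by
      intro t ht
      simp only [Finset.mem_range] at ht
      simp only [hq]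
      rw [if_pos (by omega), if_pos (by omega)]
    rw [Finset.prod_congr rfl h1]
    have h2 : q k = l := by simp [hq, hpk]
    have h3 : q (k+1) = j := by simp [hq]
    rw [h2, h3]
    exact mul_le_mul_left hple _

lemma cut_path {n : ℕ} (A : Matrix (Fin n) (Fin n) ℝ≥0)
    (hcyc : ∀ (m : ℕ) (c : Fin (m+1) → Fin n),
        (∀ i, 0 < A (c i) (c (i + 1))) → cycleWeight A c ≤ 1)
    {k : ℕ} (hk : n ≤ k) (p : ℕ → Fin n) :
    ∃ k' < k, ∃ p' : ℕ → Fin n, p' 0 = p 0 ∧ p' k' = p k ∧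
      (∏ t ∈ Finset.range k, A (p t) (p (t+1))) ≤ ∏ t ∈ Finset.range k', A (p' t) (p' (t+1)) := by
  have hninj : ¬ Function.Injective (fun i : Fin (n+1) => p i.val) := by
    intro hinj
    have := Fintype.card_le_of_injective _ hinj
    simp at this
  obtain ⟨a', b', hne, heq⟩ : ∃ a' b' : Fin (n+1), a' ≠ b' ∧ p a'.val = p b'.val := by
    by_contra hcon
    push_neg at hcon
    exact hninj fun a b hab => by_contra fun hne => hcon a b hne hab
  obtain ⟨a, b, hab, hbn, hpe⟩ : ∃ a b : ℕ, a < b ∧ b ≤ n ∧ p a = p b := by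
    rcases lt_or_gt_of_ne hne with h | h
    · exact ⟨a'.val, b'.val, h, Nat.lt_succ_iff.mp b'.isLt, heq⟩
    · exact ⟨b'.val, a'.val, h, Nat.lt_succ_iff.mp a'.isLt, heq.symm⟩
  obtain ⟨d, hd, rfl⟩ : ∃ d, 0 < d ∧ b = a + d := ⟨b - a, by omega, by omega⟩
  obtain ⟨e, rfl⟩ : ∃ e, k = a + d + e := ⟨k - (a + d), by omega⟩
  set q : ℕ → Fin n := fun t => if t ≤ a then p t else p (t + d) with hqdef
  have hq2 : ∀ s, a ≤ s → q s = p (s + d) := by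
    intro s hs
    by_cases h : s = a
    · have hsa : s ≤ a := by omega
      simp only [hqdef, if_pos hsa]
      rw [h]
      exact hpe
    · simp only [hqdef, if_neg (by omega : ¬ s ≤ a)]
  have hq1 : ∀ s, s ≤ a → q s = p s := by
    intro s hs
    simp only [hqdef, if_pos hs]
  refine ⟨a + e, by omega, q, hq1 0 (by omega), ?_, ?_⟩
  · rw [hq2 (a + e) (by omega)]
    congr 1
    omega
  · have hsplit : (∏ t ∈ Finset.range (a + d + e), A (p t) (p (t+1)))
        = (∏ t ∈ Finset.range a, A (p t) (p (t+1)))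
          * ((∏ t ∈ Finset.range d, A (p (a + t)) (p (a + t + 1)))
          * (∏ t ∈ Finset.range e, A (p (a + d + t)) (p (a + d + t + 1)))) := by
      rw [Finset.prod_range_add, Finset.prod_range_add, mul_assoc]
    have hsplit' : (∏ t ∈ Finset.range (a + e), A (q t) (q (t+1)))
        = (∏ t ∈ Finset.range a, A (p t) (p (t+1)))
          * (∏ t ∈ Finset.range e, A (p (a + d + t)) (p (a + d + t + 1))) := by
      rw [Finset.prod_range_add]
      congr 1
      · exact Finset.prod_congr rfl fun t ht => by
          simp only [Finset.mem_range] at ht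
          rw [hq1 t (by omega), hq1 (t+1) (by omega)]
      · refine Finset.prod_congr rfl fun t ht => ?_
        rw [hq2 (a + t) (by omega), hq2 (a + t + 1) (by omega)]
        have e1 : a + t + d = a + d + t := by omega
        have e2 : a + t + 1 + d = a + d + t + 1 := by omega
        rw [e1, e2]
    have hcycle : (∏ t ∈ Finset.range d, A (p (a + t)) (p (a + t + 1))) ≤ 1 := by
      obtain ⟨m, rfl⟩ : ∃ m, d = m + 1 := ⟨d - 1, by omega⟩
      set c : Fin (m+1) → Fin n := fun i => p (a + i.val) with hc
      have hedge : ∀ i : Fin (m+1), A (c i) (c (i+1)) = A (p (a + i.val)) (p (a + i.val + 1)) := by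
        intro i
        by_cases him : i = Fin.last m
        · subst him
          have h1 : (Fin.last m + 1 : Fin (m+1)) = 0 := Fin.last_add_one m
          simp only [hc, h1, Fin.val_zero, Fin.val_last, Nat.add_zero]
          rw [hpe, Nat.add_assoc a m 1]
        · have h1 : (i + 1 : Fin (m+1)).val = i.val + 1 :=
            Fin.val_add_one_of_lt (Fin.lt_last_iff_ne_last.mpr him)
          simp only [hc, h1]
          rw [Nat.add_assoc a i.val 1]
      have hcw : cycleWeight A c = ∏ t ∈ Finset.range (m+1), A (p (a + t)) (p (a + t + 1)) := by
        rw [cycleWeight, Finset.prod_congr rfl fun i _ => hedge i]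
        exact Fin.prod_univ_eq_prod_range (fun t => A (p (a + t)) (p (a + t + 1))) (m+1)
      rw [← hcw]
      by_cases hpos : ∀ i, 0 < A (c i) (c (i + 1))
      · exact hcyc m c hpos
      · push_neg at hpos
        obtain ⟨i, hi⟩ := hpos
        have hz : A (c i) (c (i+1)) = 0 := le_antisymm hi (zero_le)
        rw [cycleWeight, Finset.prod_eq_zero (Finset.mem_univ i) hz]
        exact zero_le
    rw [hsplit, hsplit']
    calc (∏ t ∈ Finset.range a, A (p t) (p (t+1)))
          * ((∏ t ∈ Finset.range d, A (p (a + t)) (p (a + t + 1)))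
          * (∏ t ∈ Finset.range e, A (p (a + d + t)) (p (a + d + t + 1))))
        ≤ (∏ t ∈ Finset.range a, A (p t) (p (t+1)))
          * (1 * (∏ t ∈ Finset.range e, A (p (a + d + t)) (p (a + d + t + 1)))) :=
          mul_le_mul_right (mul_le_mul_left hcycle _) _
      _ = _ := by rw [one_mul]


lemma maxPow_le_kleeneStar {n : ℕ} (hn : 0 < n) (A : Matrix (Fin n) (Fin n) ℝ≥0)
    (hcyc : ∀ (m : ℕ) (c : Fin (m+1) → Fin n),
        (∀ i, 0 < A (c i) (c (i + 1))) → cycleWeight A c ≤ 1) :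
    ∀ (k : ℕ) (i j : Fin n), maxPow A k i j ≤ kleeneStar A i j := by
  intro k
  induction k using Nat.strong_induction_on with
  | _ k ih =>
    intro i j
    by_cases hkn : k < n
    · exact Finset.le_sup (f := fun k => maxPow A k i j) (Finset.mem_range.mpr hkn)
    · by_cases h0 : maxPow A k i j = 0
      · rw [h0]; exact zero_le
      · obtain ⟨p, hp0, hpk, hle⟩ := exists_path hn A k i j h0
        obtain ⟨k', hk', p', hp'0, hp'k, hww⟩ := cut_path A hcyc (show n ≤ k by omega) p
        calc maxPow A k i j ≤ _ := hle
          _ ≤ _ := hww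
          _ ≤ maxPow A k' (p' 0) (p' k') := weight_le_maxPow A k' p'
          _ = maxPow A k' i j := by rw [hp'0, hp'k, hp0, hpk]
          _ ≤ kleeneStar A i j := ih k' hk' i j

/-- Fiedler–Pták scaling exists iff every cycle of the digraph of `A` has weight at most 1. -/
theorem fp_scaling_iff_cycles_le_one {n : ℕ} (A : Matrix (Fin n) (Fin n) ℝ≥0) :
    (∃ y : Fin n → ℝ≥0, (∀ i, 0 < y i) ∧ ∀ i j, (y i)⁻¹ * A i j * y j ≤ 1) ↔
      (∀ (m : ℕ) (c : Fin (m+1) → Fin n),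
        (∀ i, 0 < A (c i) (c (i + 1))) → cycleWeight A c ≤ 1) := by
  constructor
  · rintro ⟨y, hy, h⟩ m c -
    have key : ∀ i j, A i j * y j ≤ y i := by
      intro i j
      have h3 : y i * ((y i)⁻¹ * A i j * y j) ≤ y i * 1 := mul_le_mul_right (h i j) _
      rwa [mul_one, ← mul_assoc, ← mul_assoc, mul_inv_cancel₀ (hy i).ne', one_mul] at h3
    have hP : (0:ℝ≥0) < ∏ i : Fin (m+1), y (c (i+1)) :=
      pos_iff_ne_zero.mpr (Finset.prod_ne_zero_iff.mpr fun i _ => (hy _).ne')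
    have h5 : (∏ i : Fin (m+1), y (c (i+1))) = ∏ i : Fin (m+1), y (c i) :=
      Fintype.prod_equiv (Equiv.addRight 1) _ _ (fun x => rfl)
    have step : cycleWeight A c * ∏ i : Fin (m+1), y (c (i+1))
        ≤ 1 * ∏ i : Fin (m+1), y (c (i+1)) := by
      rw [cycleWeight, ← Finset.prod_mul_distrib, one_mul, h5]
      exact Finset.prod_le_prod' fun i _ => key _ _
    exact le_of_mul_le_mul_right step hP
  · intro hcyc
    rcases Nat.eq_zero_or_pos n with hn | hn
    · subst hn
      exact ⟨fun _ => 1, fun i => i.elim0, fun i j => i.elim0⟩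
    have hne : Nonempty (Fin n) := Fin.pos_iff_nonempty.mp hn
    refine ⟨fun j => Finset.univ.sup fun l => kleeneStar A j l, ?_, ?_⟩
    · intro j
      have h1 : (1:ℝ≥0) ≤ kleeneStar A j j := by
        have h0 : maxPow A 0 j j = 1 := by simp [maxPow]
        calc (1:ℝ≥0) = maxPow A 0 j j := h0.symm
          _ ≤ kleeneStar A j j :=
            Finset.le_sup (f := fun k => maxPow A k j j) (Finset.mem_range.mpr hn)
      have h2 : kleeneStar A j j ≤ Finset.univ.sup fun l => kleeneStar A j l :=
        Finset.le_sup (Finset.mem_univ j)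
      exact lt_of_lt_of_le one_pos (h1.trans h2)
    · intro i j
      have hyipos : (0:ℝ≥0) < Finset.univ.sup fun l => kleeneStar A i l := by
        have h1 : (1:ℝ≥0) ≤ kleeneStar A i i := by
          have h0 : maxPow A 0 i i = 1 := by simp [maxPow]
          calc (1:ℝ≥0) = maxPow A 0 i i := h0.symm
            _ ≤ kleeneStar A i i :=
              Finset.le_sup (f := fun k => maxPow A k i i) (Finset.mem_range.mpr hn)
        exact lt_of_lt_of_le one_pos (h1.trans (Finset.le_sup (Finset.mem_univ i)))
      have key : A i j * (Finset.univ.sup fun l => kleeneStar A j l)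
          ≤ Finset.univ.sup fun l => kleeneStar A i l := by
        obtain ⟨l, -, hl⟩ := Finset.exists_mem_eq_sup Finset.univ
          Finset.univ_nonempty (fun l => kleeneStar A j l)
        rw [hl]
        obtain ⟨k, -, hk⟩ := Finset.exists_mem_eq_sup (Finset.range n)
          ⟨0, Finset.mem_range.mpr hn⟩ (fun k => maxPow A k j l)
        have hkl : kleeneStar A j l = maxPow A k j l := hk
        rw [hkl]
        by_cases h0 : maxPow A k j l = 0
        · rw [h0, mul_zero]; exact zero_le
        obtain ⟨p, hp0, hpk, hle⟩ := exists_path hn A k j l h0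
        set q : ℕ → Fin n := fun t => if t = 0 then i else p (t-1) with hq
        have hw : A i j * (∏ t ∈ Finset.range k, A (p t) (p (t+1)))
            = ∏ t ∈ Finset.range (k+1), A (q t) (q (t+1)) := by
          rw [Finset.prod_range_succ']
          have e0 : A (q 0) (q 1) = A i j := by
            simp only [hq, if_pos rfl, if_neg (one_ne_zero)]
            rw [hp0]
          have et : ∀ t ∈ Finset.range k, A (q (t+1)) (q (t+1+1)) = A (p t) (p (t+1)) := by
            intro t ht
            simp only [hq, if_neg (Nat.succ_ne_zero t), if_neg (Nat.succ_ne_zero (t+1)),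
              Nat.add_sub_cancel]
          rw [Finset.prod_congr rfl et, e0, mul_comm]
        have h2 : A i j * maxPow A k j l ≤ maxPow A (k+1) i l := by
          calc A i j * maxPow A k j l
              ≤ A i j * ∏ t ∈ Finset.range k, A (p t) (p (t+1)) := mul_le_mul_right hle _
            _ = ∏ t ∈ Finset.range (k+1), A (q t) (q (t+1)) := hw
            _ ≤ maxPow A (k+1) (q 0) (q (k+1)) := weight_le_maxPow A (k+1) q
            _ = maxPow A (k+1) i l := by
                have hq0 : q 0 = i := by simp [hq]
                have hqk : q (k+1) = l := by
                  simp only [hq, if_neg (Nat.succ_ne_zero k), Nat.add_sub_cancel]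
                  exact hpk
                rw [hq0, hqk]
        calc A i j * maxPow A k j l ≤ maxPow A (k+1) i l := h2
          _ ≤ kleeneStar A i l := maxPow_le_kleeneStar hn A hcyc (k+1) i l
          _ ≤ _ := Finset.le_sup (Finset.mem_univ l)
      calc (Finset.univ.sup fun l => kleeneStar A i l)⁻¹ * A i j
              * (Finset.univ.sup fun l => kleeneStar A j l)
          = (Finset.univ.sup fun l => kleeneStar A i l)⁻¹
              * (A i j * (Finset.univ.sup fun l => kleeneStar A j l)) := mul_assoc _ _ _
        _ ≤ (Finset.univ.sup fun l => kleeneStar A i l)⁻¹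
              * (Finset.univ.sup fun l => kleeneStar A i l) := mul_le_mul_right key _
        _ = 1 := inv_mul_cancel₀ hyipos.ne'
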